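/- arXiv:1908.00099 — 3 statements merged into one kernel-verified Lean document; each statement's English description precedes it below -/
import Mathlib

section
/- If d is a graphical sequence with d_i > 0, then d has a realization as a simple graph in which vertex i is adjacent to d_i of the highest-degree vertices other than i. -/
/-!
Among all realizations of `d`, take one maximizing `∑_{w ~ i} d w`, the total degree of the
neighbours of `i`. Suppose a neighbour `j` of `i` had `d j < d k` for a non-neighbour `k ≠ i`.
Since `i` is a neighbour of `j` but not of `k`, the vertex `k` has a neighbour `l ≠ j` not adjacent
to `j`, and the edge switch `ij, kl ↦ ik, jl` preserves every degree while replacing `j` by `k`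
among the neighbours of `i`, raising the total by `d k - d j`.
-/

/-- A degree sequence `d` on `N` vertices is graphical if it is realized as the
degree sequence of some simple undirected graph on `N` vertices. -/
def Graphical {N : ℕ} (d : Fin N → ℕ) : Prop :=
  ∃ G : SimpleGraph (Fin N), ∀ i, Nat.card {j // G.Adj i j} = d i

open Finset

namespace SimpleGraph

variable {V : Type*}

def switch (G : SimpleGraph V) (a b c e : V) : SimpleGraph V :=
  fromEdgeSet (G.edgeSet \ {s(a, b), s(c, e)} ∪ {s(a, c), s(b, e)})

lemma switch_adj {G : SimpleGraph V} {a b c e x y : V} :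
    (G.switch a b c e).Adj x y ↔
      (G.Adj x y ∧ s(x, y) ≠ s(a, b) ∧ s(x, y) ≠ s(c, e) ∨ s(x, y) = s(a, c) ∨ s(x, y) = s(b, e))
        ∧ x ≠ y := by
  simp only [switch, fromEdgeSet_adj, Set.mem_union, Set.mem_sdiff, Set.mem_insert_iff,
    Set.mem_singleton_iff, mem_edgeSet, not_or]

lemma switch_flip (G : SimpleGraph V) (a b c e : V) : G.switch a b c e = G.switch b a e c := by
  rw [switch, switch, Sym2.eq_swap (a := a), Sym2.eq_swap (a := c), Set.pair_comm s(a, c)]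

lemma switch_comm (G : SimpleGraph V) (a b c e : V) : G.switch a b c e = G.switch c e a b := by
  simp only [switch, Set.pair_comm s(a, b), Sym2.eq_swap (a := a) (b := c),
    Sym2.eq_swap (a := b) (b := e)]

section Finite

variable [Fintype V]

open scoped Classical

lemma natCard_adj_eq_degree (G : SimpleGraph V) (v : V) :
    Nat.card {w // G.Adj v w} = G.degree v := by
  rw [← card_neighborSet_eq_degree, Nat.card_eq_fintype_card]
  rfl

lemma neighborFinset_switch_left {G : SimpleGraph V} {a b c e : V}
    (hab : a ≠ b) (hac : a ≠ c) (hae : a ≠ e) :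
    (G.switch a b c e).neighborFinset a = insert c ((G.neighborFinset a).erase b) := by
  ext w
  simp only [mem_neighborFinset, switch_adj, Sym2.eq_iff, mem_insert, mem_erase]
  grind [G.ne_of_adj]

lemma degree_switch_left {G : SimpleGraph V} {a b c e : V} (hab : G.Adj a b) (hac : ¬G.Adj a c)
    (hne : a ≠ c) (hae : a ≠ e) : (G.switch a b c e).degree a = G.degree a := by
  rw [← card_neighborFinset_eq_degree, neighborFinset_switch_left hab.ne hne hae,
    card_insert_of_notMem (by simp [hac]), card_erase_add_one (by simpa using hab),
    card_neighborFinset_eq_degree]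

lemma degree_switch_of_ne {G : SimpleGraph V} {a b c e v : V}
    (ha : v ≠ a) (hb : v ≠ b) (hc : v ≠ c) (he : v ≠ e) :
    (G.switch a b c e).degree v = G.degree v := by
  rw [← card_neighborFinset_eq_degree, ← card_neighborFinset_eq_degree]
  congr 1
  ext w
  simp only [mem_neighborFinset, switch_adj, Sym2.eq_iff]
  grind [G.ne_of_adj]

lemma degree_switch {G : SimpleGraph V} {a b c e : V} (hab : G.Adj a b) (hce : G.Adj c e)
    (hac : ¬G.Adj a c) (hbe : ¬G.Adj b e) (hne_ac : a ≠ c) (hne_be : b ≠ e) (v : V) :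
    (G.switch a b c e).degree v = G.degree v := by
  have hae : a ≠ e := by rintro rfl; exact hac hce.symm
  have hbc : b ≠ c := by rintro rfl; exact hac hab
  by_cases ha : v = a
  · subst ha
    exact degree_switch_left hab hac hne_ac hae
  by_cases hb : v = b
  · subst hb
    rw [switch_flip]
    exact degree_switch_left hab.symm hbe hne_be hbc
  by_cases hc : v = c
  · subst hc
    rw [switch_comm]
    exact degree_switch_left hce (fun h => hac h.symm) hne_ac.symm hbc.symm
  by_cases he : v = e
  · subst he
    rw [switch_comm, switch_flip]
    exact degree_switch_left hce.symm (fun h => hbe h.symm) hne_be.symm hae.symm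
  exact degree_switch_of_ne ha hb hc he

lemma exists_adj_not_adj_of_degree_lt {G : SimpleGraph V} {i j k : V} (hij : G.Adj i j)
    (hik : ¬G.Adj i k) (hdeg : G.degree j < G.degree k) :
    ∃ l, G.Adj k l ∧ ¬G.Adj j l ∧ l ≠ j := by
  by_contra! h
  have hsub : G.neighborFinset k ⊆ insert j ((G.neighborFinset j).erase i) := by
    intro l hl
    rw [mem_neighborFinset] at hl
    by_cases hlj : l = j
    · simp [hlj]
    · have hjl : G.Adj j l := by by_contra hjl; exact hlj (h l hl hjl)
      simp [hjl, hlj, show l ≠ i by rintro rfl; exact hik hl.symm]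
  have hcard := (card_le_card hsub).trans (card_insert_le _ _)
  rw [card_erase_of_mem (by simpa using hij.symm), card_neighborFinset_eq_degree,
    card_neighborFinset_eq_degree] at hcard
  have hj : 0 < G.degree j := (G.degree_pos_iff_exists_adj j).mpr ⟨i, hij.symm⟩
  omega

lemma exists_degree_eq_neighborFinset_eq_insert_erase {G : SimpleGraph V} {i j k : V}
    (hij : G.Adj i j) (hik : ¬G.Adj i k) (hki : k ≠ i) (hdeg : G.degree j < G.degree k) :
    ∃ G' : SimpleGraph V, (∀ v, G'.degree v = G.degree v) ∧
      G'.neighborFinset i = insert k ((G.neighborFinset i).erase j) := by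
  obtain ⟨l, hkl, hjl, hlj⟩ := exists_adj_not_adj_of_degree_lt hij hik hdeg
  have hil : i ≠ l := by rintro rfl; exact hik hkl.symm
  exact ⟨G.switch i j k l, degree_switch hij hkl hik hjl hki.symm hlj.symm,
    neighborFinset_switch_left hij.ne hki.symm hil⟩

lemma degree_le_of_forall_sum_le {G : SimpleGraph V} {d : V → ℕ} {i j k : V}
    (hG : ∀ v, G.degree v = d v)
    (hmax : ∀ G' : SimpleGraph V, (∀ v, G'.degree v = d v) →
      ∑ w ∈ G'.neighborFinset i, d w ≤ ∑ w ∈ G.neighborFinset i, d w)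
    (hij : G.Adj i j) (hik : ¬G.Adj i k) (hki : k ≠ i) : d k ≤ d j := by
  by_contra! hdeg
  obtain ⟨G', hG', hnbr⟩ :=
    exists_degree_eq_neighborFinset_eq_insert_erase hij hik hki (by rwa [hG, hG])
  have hle := hmax G' fun v => (hG' v).trans (hG v)
  rw [hnbr, sum_insert (by simp [hik])] at hle
  have hsplit := add_sum_erase (G.neighborFinset i) d ((mem_neighborFinset G i j).mpr hij)
  omega

end Finite

end SimpleGraph

theorem graphical_realization_highest_degree_general {N : ℕ} (d : Fin N → ℕ)
    (hd : Graphical d) (i : Fin N) :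
    ∃ (G : SimpleGraph (Fin N)) (S : Finset (Fin N)),
      (∀ j, Nat.card {k // G.Adj j k} = d j) ∧
      i ∉ S ∧ S.card = d i ∧
      (∀ j ∈ S, G.Adj i j) ∧ (∀ j, G.Adj i j → j ∈ S) ∧
      (∀ j ∈ S, ∀ k, k ∉ S → k ≠ i → d k ≤ d j) := by
  classical
  obtain ⟨G₀, hG₀⟩ := hd
  obtain ⟨G, hG, hmax⟩ :=
    exists_max_image (univ.filter fun G : SimpleGraph (Fin N) => ∀ v, G.degree v = d v)
      (fun G => ∑ w ∈ G.neighborFinset i, d w)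
      ⟨G₀, by simpa [← SimpleGraph.natCard_adj_eq_degree] using hG₀⟩
  simp only [mem_filter, mem_univ, true_and] at hG hmax
  refine ⟨G, G.neighborFinset i, fun j => (G.natCard_adj_eq_degree j).trans (hG j), by simp,
    by simp [hG], fun j hj => by simpa using hj, fun j hj => by simpa using hj,
    fun j hj k hk hki => ?_⟩
  rw [SimpleGraph.mem_neighborFinset] at hj hk
  exact SimpleGraph.degree_le_of_forall_sum_le hG hmax hj hk hki

/-- If `d` is graphical with `d i > 0`, then `d` has a realization in which vertex `i`
is adjacent to a set `S` of `d i` highest-degree vertices other than `i` (i.e., every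
vertex of `S` has degree at least that of any vertex outside `S` other than `i`). -/
theorem graphical_realization_highest_degree {N : ℕ} (d : Fin N → ℕ)
    (hd : Graphical d) (i : Fin N) (hi : 0 < d i) :
    ∃ (G : SimpleGraph (Fin N)) (S : Finset (Fin N)),
      (∀ j, Nat.card {k // G.Adj j k} = d j) ∧
      i ∉ S ∧ S.card = d i ∧
      (∀ j ∈ S, G.Adj i j) ∧ (∀ j, G.Adj i j → j ∈ S) ∧
      (∀ j ∈ S, ∀ k, k ∉ S → k ≠ i → d k ≤ d j) :=
  graphical_realization_highest_degree_general d hd i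
end

section
/- In the link-formation model with utility externality s_ij(d) = Σ_k d_jk (popularity) or s_ij(d) = Σ_k d_ik d_jk (transitivity) and γ ≥ 0, the best-response map φ(d), whose (i,j) entry is 1(Ã_i + Ã_j + γ·s̃_ij(d) ≥ Ũ_ij), is monotone nondecreasing in d with respect to entrywise (edge-inclusion) order; hence a pairwise stable network (fixed point of φ) exists. -/
/-- The best-response map of the link formation game: its `(i,j)` entry is the
indicator `1(Ã_i + Ã_j + γ·(s_ij(d) + s_ji(d)) ≥ Ũ_ij)` for `i ≠ j` (and `0` on the
diagonal). -/
noncomputable def bestResponse (N : ℕ) (Atil : Fin N → ℝ) (U : Fin N → Fin N → ℝ)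
    (γ : ℝ) (s : (Fin N → Fin N → Bool) → Fin N → Fin N → ℕ)
    (d : Fin N → Fin N → Bool) : Fin N → Fin N → Bool := fun i j =>
  decide (i ≠ j) &&
    decide (U i j ≤ Atil i + Atil j + γ * ((s d i j : ℝ) + (s d j i : ℝ)))

/-- With the popularity externality `s_ij(d) = Σ_k d_jk` or the transitivity
externality `s_ij(d) = Σ_k d_ik d_jk`, and `γ ≥ 0`, the best-response map is monotone
nondecreasing in `d` (entrywise), and hence (by Tarski's fixed point theorem on the
finite lattice of 0-1 matrices) a pairwise stable network, i.e. a fixed point, exists. -/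
theorem best_response_monotone_and_fixed_point (N : ℕ) (Atil : Fin N → ℝ)
    (U : Fin N → Fin N → ℝ) (hU : ∀ i j, U i j = U j i) (γ : ℝ) (hγ : 0 ≤ γ)
    (s : (Fin N → Fin N → Bool) → Fin N → Fin N → ℕ)
    (hs : (∀ d i j, s d i j = ∑ k, if d j k then 1 else 0) ∨
          (∀ d i j, s d i j = ∑ k, if d i k ∧ d j k then 1 else 0)) :
    (∀ d d' : Fin N → Fin N → Bool,
      (∀ i j, d i j = true → d' i j = true) →
      ∀ i j, bestResponse N Atil U γ s d i j = true →
        bestResponse N Atil U γ s d' i j = true) ∧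
    (∃ d : Fin N → Fin N → Bool, bestResponse N Atil U γ s d = d) := by
  -- `s` is monotone in `d`.
  have hsmono : ∀ d d' : Fin N → Fin N → Bool,
      (∀ i j, d i j = true → d' i j = true) → ∀ i j, s d i j ≤ s d' i j := by
    intro d d' h i j
    rcases hs with hs | hs
    · rw [hs, hs]
      apply Finset.sum_le_sum
      intro k _
      by_cases hd : d j k = true
      · simp [hd, h j k hd]
      · simp [hd]
    · rw [hs, hs]
      apply Finset.sum_le_sum
      intro k _
      by_cases hd : d i k = true ∧ d j k = true
      · simp [hd.1, hd.2, h i k hd.1, h j k hd.2]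
      · have h0 : (if d i k ∧ d j k then 1 else 0) = 0 := by
          rw [if_neg]
          intro ⟨ha, hb⟩
          exact hd ⟨ha, hb⟩
        rw [h0]
        exact Nat.zero_le _
  -- monotonicity of the best response
  have hmono : ∀ d d' : Fin N → Fin N → Bool,
      (∀ i j, d i j = true → d' i j = true) →
      ∀ i j, bestResponse N Atil U γ s d i j = true →
        bestResponse N Atil U γ s d' i j = true := by
    intro d d' h i j hbr
    simp only [bestResponse, Bool.and_eq_true, decide_eq_true_eq] at hbr ⊢
    refine ⟨hbr.1, le_trans hbr.2 ?_⟩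
    have h1 : (s d i j : ℝ) + (s d j i : ℝ) ≤ (s d' i j : ℝ) + (s d' j i : ℝ) := by
      have := hsmono d d' h i j
      have := hsmono d d' h j i
      push_cast
      gcongr <;> assumption
    have := mul_le_mul_of_nonneg_left h1 hγ
    linarith
  refine ⟨hmono, ?_⟩
  -- fixed point via Tarski (Knaster–Tarski `lfp` on the complete lattice of 0-1 matrices)
  have hm : Monotone (bestResponse N Atil U γ s) := by
    intro d d' hle
    intro i j
    rw [Bool.le_iff_imp]
    exact hmono d d' (fun a b hab => by
      have := hle a b
      rw [Bool.le_iff_imp] at this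
      exact this hab) i j
  exact ⟨_, OrderHom.map_lfp ⟨bestResponse N Atil U γ s, hm⟩⟩
end

section
/- Let Y and Y' be two runs of the Blitzstein–Diaconis sequential algorithm (which always selects the minimal-positive-degree vertex, breaking ties by lowest index, and then saturates all of that vertex's remaining edges before moving on) producing the same final graph. Then the sequences of selected vertices i_1,...,i_M coincide, and at each stage k the same set of a_k edges incident to i_k is added (possibly in a different order). Consequently, the number of distinct edge-orderings the algorithm can follow to produce a given output graph equals ∏_{k=1}^M a_k!, where a_k is the residual degree of vertex i_k when it is first selected. -/
/-- Vertex `i` is the one selected by the Blitzstein–Diaconis algorithm for residual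
degree sequence `d`: it has minimal positive residual degree, with ties broken by
lowest index.  (Note that after an edge incident to the selected vertex is added its
residual degree strictly decreases, so it remains the selected vertex until it is
saturated; thus this selection rule is equivalent to saturating each selected vertex
before moving on.) -/
def IsSel {N : ℕ} (d : Fin N → ℕ) (i : Fin N) : Prop :=
  0 < d i ∧ ∀ j, 0 < d j → d i < d j ∨ (d i = d j ∧ i ≤ j)

/-- Decrease the residual degrees of the two endpoints of a newly added edge by one. -/
def decTwo {N : ℕ} (d : Fin N → ℕ) (i j : Fin N) : Fin N → ℕ :=
  fun k => if k = i ∨ k = j then d k - 1 else d k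

/-- A run of the Blitzstein–Diaconis sequential algorithm starting from residual
degree sequence `d`: the ordered list of edges added (each recorded as
(selected vertex, chosen partner)).  Each added edge must be incident to the currently
selected vertex, join it to a distinct partner of positive residual degree, and not
duplicate an edge added later in the run; the run terminates exactly when all residual
degrees are zero. -/
def ValidRun {N : ℕ} : (Fin N → ℕ) → List (Fin N × Fin N) → Prop
  | d, [] => ∀ j, d j = 0
  | d, e :: Y => IsSel d e.1 ∧ e.2 ≠ e.1 ∧ 0 < d e.2 ∧
      e ∉ Y ∧ (e.2, e.1) ∉ Y ∧ ValidRun (decTwo d e.1 e.2) Y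

/-- Two runs `Y` and `Y'` produce the same final graph when they contain the same
edges up to orientation. -/
def SameGraph {N : ℕ} (Y Y' : List (Fin N × Fin N)) : Prop :=
  ∀ i j : Fin N, ((i, j) ∈ Y ∨ (j, i) ∈ Y) ↔ ((i, j) ∈ Y' ∨ (j, i) ∈ Y')

/-!
The selected vertex depends only on the residual degrees, and once selected a vertex stays
selected until it is saturated. Hence every run from `d` is a stage (the `d i` edges from the
selected vertex `i` to distinct partners, in some order) followed by a run from the residual
degrees that never touches `i` again. In two runs of the same graph both first stages consist of
the graph's edges at `i`, so they are permutations of each other and leave the same residual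
degrees. By induction, the runs of a given graph are exactly the concatenations of arbitrary
reorderings of its stages, and there are `∏ a_k!` of them.
-/

open List

theorem List.Nodup.ncard_setOf_perm {α : Type*} {l : List α} (hl : l.Nodup) :
    {l' : List α | l'.Perm l}.ncard = l.length.factorial := by
  classical
  have : {l' : List α | l'.Perm l} = ↑l.permutations.toFinset := by
    ext l'
    simp [mem_permutations]
  rw [this, Set.ncard_coe_finset, toFinset_card_of_nodup (nodup_permutations _ hl),
    length_permutations]

theorem Set.ncard_image2_append {α : Type*} {S T : Set (List α)} {n : ℕ}
    (hS : ∀ l ∈ S, l.length = n) : (Set.image2 (· ++ ·) S T).ncard = S.ncard * T.ncard := by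
  rw [← Set.image_prod, Set.InjOn.ncard_image, Set.ncard_prod]
  rintro ⟨l₁, m₁⟩ ⟨h₁, -⟩ ⟨l₂, m₂⟩ ⟨h₂, -⟩ h
  obtain ⟨rfl, rfl⟩ := append_inj h ((hS _ h₁).trans (hS _ h₂).symm)
  rfl

variable {N : ℕ}

theorem IsSel.unique {d : Fin N → ℕ} {i j : Fin N} (hi : IsSel d i) (hj : IsSel d j) :
    i = j := by
  rcases hi.2 j hj.1 with h | ⟨h, hij⟩ <;> rcases hj.2 i hi.1 with h' | ⟨h', hji⟩
  · omega
  · omega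
  · omega
  · exact le_antisymm hij hji

section decTwo

variable {d : Fin N → ℕ} {i j k : Fin N}

theorem decTwo_le (d : Fin N → ℕ) (i j k : Fin N) : decTwo d i j k ≤ d k := by
  unfold decTwo; split <;> omega

@[simp]
theorem decTwo_apply_left : decTwo d i j i = d i - 1 := by
  simp [decTwo]

@[simp]
theorem decTwo_apply_right : decTwo d i j j = d j - 1 := by
  simp [decTwo]

theorem decTwo_apply_of_ne (hi : k ≠ i) (hj : k ≠ j) : decTwo d i j k = d k := by
  simp [decTwo, hi, hj]

theorem decTwo_comm (d : Fin N → ℕ) (i j i' j' : Fin N) :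
    decTwo (decTwo d i j) i' j' = decTwo (decTwo d i' j') i j := by
  funext k
  unfold decTwo
  split_ifs <;> omega

/-- The partner's residual degree drops together with that of `i`, so `i` stays minimal. -/
theorem IsSel.decTwo (h : IsSel d i) (h2 : 2 ≤ d i) (hj : j ≠ i) : IsSel (decTwo d i j) i := by
  refine ⟨by simp only [decTwo_apply_left]; omega, fun k hk => ?_⟩
  rw [decTwo_apply_left]
  by_cases hki : k = i
  · subst hki; simp
  have hmin := h.2 k (hk.trans_le (decTwo_le d i j k))
  by_cases hkj : k = j
  · subst hkj
    rw [decTwo_apply_right] at hk ⊢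
    omega
  · rw [decTwo_apply_of_ne hki hkj] at hk ⊢
    omega

end decTwo

theorem ValidRun.eq_nil_of_forall_eq_zero {d : Fin N → ℕ} {Y : List (Fin N × Fin N)}
    (h : ValidRun d Y) (hd : ∀ j, d j = 0) : Y = [] := by
  cases Y with
  | nil => rfl
  | cons e Y => exact absurd h.1.1 (by simp [hd])

theorem ValidRun.forall_ne_of_eq_zero {d : Fin N → ℕ} {Y : List (Fin N × Fin N)}
    (h : ValidRun d Y) {i : Fin N} (hi : d i = 0) : ∀ f ∈ Y, f.1 ≠ i ∧ f.2 ≠ i := by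
  induction Y generalizing d with
  | nil => simp
  | cons e Y ih =>
    obtain ⟨⟨he₁, -⟩, -, he₂, -, -, hY⟩ := h
    rw [forall_mem_cons]
    exact ⟨⟨ne_of_apply_ne d (by omega), ne_of_apply_ne d (by omega)⟩,
      ih hY (Nat.eq_zero_of_le_zero (hi ▸ decTwo_le d e.1 e.2 i))⟩

def residualDeg (d : Fin N → ℕ) (B : List (Fin N × Fin N)) : Fin N → ℕ :=
  B.foldl (fun d f => decTwo d f.1 f.2) d

theorem residualDeg_perm {B B' : List (Fin N × Fin N)} (h : B.Perm B') (d : Fin N → ℕ) :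
    residualDeg d B = residualDeg d B' := by
  induction h generalizing d with
  | nil => rfl
  | cons f _ ih => exact ih _
  | swap f f' B => exact congrArg (residualDeg · B) (decTwo_comm d _ _ _ _)
  | trans _ _ ih ih' => rw [ih, ih']

structure IsStage (d : Fin N → ℕ) (i : Fin N) (B : List (Fin N × Fin N)) : Prop where
  length_eq : B.length = d i
  fst_eq : ∀ f ∈ B, f.1 = i
  snd_ne : ∀ f ∈ B, f.2 ≠ i
  snd_pos : ∀ f ∈ B, 0 < d f.2
  nodup_snd : (B.map Prod.snd).Nodup

namespace IsStage

variable {d : Fin N → ℕ} {i : Fin N} {B : List (Fin N × Fin N)}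

theorem nil (h : d i = 0) : IsStage d i [] :=
  ⟨h.symm, by simp, by simp, by simp, nodup_nil⟩

theorem cons {e : Fin N × Fin N} (hB : IsStage (decTwo d e.1 e.2) e.1 B) (hsel : 0 < d e.1)
    (hne : e.2 ≠ e.1) (hpos : 0 < d e.2) (he : e ∉ B) : IsStage d e.1 (e :: B) where
  length_eq := by rw [length_cons, hB.length_eq, decTwo_apply_left]; omega
  fst_eq := forall_mem_cons.2 ⟨rfl, hB.fst_eq⟩
  snd_ne := forall_mem_cons.2 ⟨hne, hB.snd_ne⟩
  snd_pos := forall_mem_cons.2 ⟨hpos, fun f hf => (hB.snd_pos f hf).trans_le (decTwo_le _ _ _ _)⟩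
  nodup_snd := by
    refine nodup_cons.2 ⟨fun hmem => ?_, hB.nodup_snd⟩
    obtain ⟨f, hf, hfe⟩ := mem_map.1 hmem
    exact he (Prod.ext (hB.fst_eq f hf) hfe ▸ hf)

theorem tail {e : Fin N × Fin N} (h : IsStage d i (e :: B)) : IsStage (decTwo d i e.2) i B where
  length_eq := by have := h.length_eq; rw [length_cons] at this; simp; omega
  fst_eq f hf := h.fst_eq f (mem_cons_of_mem e hf)
  snd_ne f hf := h.snd_ne f (mem_cons_of_mem e hf)
  snd_pos f hf := by
    have hfe : f.2 ≠ e.2 := fun hfe => (nodup_cons.1 h.nodup_snd).1 (hfe ▸ mem_map_of_mem hf)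
    rw [decTwo_apply_of_ne (h.snd_ne f (mem_cons_of_mem e hf)) hfe]
    exact h.snd_pos f (mem_cons_of_mem e hf)
  nodup_snd := (nodup_cons.1 h.nodup_snd).2

theorem perm (h : IsStage d i B) {B' : List (Fin N × Fin N)} (hp : B.Perm B') :
    IsStage d i B' where
  length_eq := hp.length_eq ▸ h.length_eq
  fst_eq f hf := h.fst_eq f (hp.mem_iff.2 hf)
  snd_ne f hf := h.snd_ne f (hp.mem_iff.2 hf)
  snd_pos f hf := h.snd_pos f (hp.mem_iff.2 hf)
  nodup_snd := (hp.map Prod.snd).nodup_iff.1 h.nodup_snd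

theorem nodup (h : IsStage d i B) : B.Nodup :=
  h.nodup_snd.of_map _

theorem ne_nil (h : IsStage d i B) (hi : 0 < d i) : B ≠ [] := by
  rintro rfl
  have := h.length_eq
  simp at this
  omega

theorem residualDeg_self (h : IsStage d i B) : residualDeg d B i = 0 := by
  induction B generalizing d with
  | nil => simpa [residualDeg] using h.length_eq.symm
  | cons e B ih =>
    have he : e.1 = i := h.fst_eq e mem_cons_self
    exact he ▸ ih h.tail

end IsStage

/-- The selected vertex stays selected until it is saturated. -/
theorem ValidRun.exists_stage {d : Fin N → ℕ} {e : Fin N × Fin N} {Y : List (Fin N × Fin N)}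
    (h : ValidRun d (e :: Y)) :
    ∃ B T, e :: Y = B ++ T ∧ IsStage d e.1 B ∧ ValidRun (residualDeg d B) T := by
  induction Y generalizing d e with
  | nil =>
    obtain ⟨hsel, hne, hpos, -, -, hY⟩ := h
    have h₁ : d e.1 = 1 := by have := hY e.1; simp at this; have := hsel.1; omega
    exact ⟨[e], [], rfl, (IsStage.nil (by simp [h₁])).cons hsel.1 hne hpos (not_mem_nil), hY⟩
  | cons e' Y ih =>
    obtain ⟨hsel, hne, hpos, he, -, hY⟩ := h
    by_cases h₁ : d e.1 = 1
    · exact ⟨[e], e' :: Y, rfl, (IsStage.nil (by simp [h₁])).cons hsel.1 hne hpos (not_mem_nil),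
        hY⟩
    have he' : e'.1 = e.1 := hY.1.unique (hsel.decTwo (by have := hsel.1; omega) hne)
    obtain ⟨B, T, hsplit, hB, hT⟩ := ih hY
    rw [he'] at hB
    refine ⟨e :: B, T, by rw [hsplit, cons_append], hB.cons hsel.1 hne hpos ?_, hT⟩
    exact fun heB => he (hsplit ▸ mem_append_left T heB)

theorem validRun_stage_append {d : Fin N → ℕ} {i : Fin N} {B T : List (Fin N × Fin N)}
    (hsel : IsSel d i) (hB : IsStage d i B) (hT : ValidRun (residualDeg d B) T) :
    ValidRun d (B ++ T) := by
  have hTi := hT.forall_ne_of_eq_zero hB.residualDeg_self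
  induction B generalizing d with
  | nil => exact hT
  | cons e B ih =>
    obtain ⟨i', j⟩ := e
    have hi' : i' = i := hB.fst_eq _ mem_cons_self
    subst i'
    have hj : j ≠ i := hB.snd_ne _ mem_cons_self
    refine ⟨hsel, hj, hB.snd_pos _ mem_cons_self, ?_, ?_, ?_⟩
    · exact fun h => (mem_append.1 h).elim (nodup_cons.1 hB.nodup).1 fun h => (hTi _ h).1 rfl
    · exact fun h => (mem_append.1 h).elim (fun h => hB.snd_ne _ (mem_cons_of_mem _ h) rfl)
        fun h => (hTi _ h).2 rfl
    · rcases eq_or_ne B [] with rfl | hBne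
      · exact hT
      have h₂ : 2 ≤ d i := by
        have := hB.length_eq
        rw [length_cons] at this
        have := length_pos_iff.2 hBne
        omega
      exact ih (hsel.decTwo h₂ hj) hB.tail hT

section SameGraph

variable {i : Fin N} {B T : List (Fin N × Fin N)}

theorem edge_mem_stage_append_iff (hB : ∀ f ∈ B, f.2 ≠ i) (hT : ∀ f ∈ T, f.1 ≠ i ∧ f.2 ≠ i)
    (j : Fin N) : ((i, j) ∈ B ++ T ∨ (j, i) ∈ B ++ T) ↔ (i, j) ∈ B := by
  refine ⟨fun h => ?_, fun h => Or.inl (mem_append_left T h)⟩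
  rcases h with h | h <;> rcases mem_append.1 h with h | h
  · exact h
  · exact absurd rfl (hT _ h).1
  · exact absurd rfl (hB _ h)
  · exact absurd rfl (hT _ h).2

theorem edge_mem_tail_iff (hB : ∀ f ∈ B, f.1 = i) (hT : ∀ f ∈ T, f.1 ≠ i ∧ f.2 ≠ i)
    (j k : Fin N) :
    ((j, k) ∈ T ∨ (k, j) ∈ T) ↔ ((j, k) ∈ B ++ T ∨ (k, j) ∈ B ++ T) ∧ j ≠ i ∧ k ≠ i := by
  constructor
  · rintro (h | h)
    · exact ⟨Or.inl (mem_append_right B h), (hT _ h).1, (hT _ h).2⟩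
    · exact ⟨Or.inr (mem_append_right B h), (hT _ h).2, (hT _ h).1⟩
  · rintro ⟨h | h, hj, hk⟩ <;> rcases mem_append.1 h with h | h
    · exact absurd (hB _ h) hj
    · exact Or.inl h
    · exact absurd (hB _ h) hk
    · exact Or.inr h

/-- The first stages of two runs of the same graph consist of the graph's edges at `i`. -/
theorem SameGraph.stage_perm {d : Fin N → ℕ} {B₀ T₀ : List (Fin N × Fin N)}
    (hsg : SameGraph (B ++ T) (B₀ ++ T₀)) (hB : IsStage d i B) (hB₀ : IsStage d i B₀)
    (hT : ∀ f ∈ T, f.1 ≠ i ∧ f.2 ≠ i) (hT₀ : ∀ f ∈ T₀, f.1 ≠ i ∧ f.2 ≠ i) :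
    B.Perm B₀ ∧ SameGraph T T₀ := by
  refine ⟨(perm_ext_iff_of_nodup hB.nodup hB₀.nodup).2 fun ⟨i', j⟩ => ?_, fun j k => ?_⟩
  · by_cases hi' : i' = i
    · subst hi'
      rw [← edge_mem_stage_append_iff hB.snd_ne hT, ← edge_mem_stage_append_iff hB₀.snd_ne hT₀]
      exact hsg i' j
    · exact iff_of_false (fun h => hi' (hB.fst_eq _ h)) (fun h => hi' (hB₀.fst_eq _ h))
  · rw [edge_mem_tail_iff hB.fst_eq hT, edge_mem_tail_iff hB₀.fst_eq hT₀, hsg j k]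

end SameGraph

theorem setOf_validRun_sameGraph_stage_append {d : Fin N → ℕ} {i : Fin N}
    {B₀ T₀ : List (Fin N × Fin N)} (hsel : IsSel d i) (hB₀ : IsStage d i B₀)
    (hT₀ : ValidRun (residualDeg d B₀) T₀) :
    {Y | ValidRun d Y ∧ SameGraph Y (B₀ ++ T₀)} =
      Set.image2 (· ++ ·) {B | B.Perm B₀} {T | ValidRun (residualDeg d B₀) T ∧ SameGraph T T₀} := by
  ext Y
  constructor
  · rintro ⟨hY, hsg⟩
    cases Y with
    | nil =>
      obtain ⟨f, hf⟩ := exists_mem_of_ne_nil B₀ (hB₀.ne_nil hsel.1)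
      have := (hsg i f.2).2 (Or.inl (mem_append_left T₀ (hB₀.fst_eq f hf ▸ hf)))
      simp at this
    | cons e Y =>
      obtain ⟨B, T, hsplit, hB, hT⟩ := hY.exists_stage
      obtain rfl : e.1 = i := hY.1.unique hsel
      obtain ⟨hperm, hsgT⟩ := (hsplit ▸ hsg).stage_perm hB hB₀
        (hT.forall_ne_of_eq_zero hB.residualDeg_self)
        (hT₀.forall_ne_of_eq_zero hB₀.residualDeg_self)
      exact ⟨B, hperm, T, ⟨residualDeg_perm hperm d ▸ hT, hsgT⟩, hsplit.symm⟩
  · rintro ⟨B, hperm, T, ⟨hT, hsgT⟩, rfl⟩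
    refine ⟨validRun_stage_append hsel (hB₀.perm hperm.symm) (residualDeg_perm hperm d ▸ hT),
      fun j k => ?_⟩
    simp only [mem_append, hperm.mem_iff]
    have := hsgT j k
    tauto

@[elab_as_elim]
theorem ValidRun.stage_induction
    {motive : (d : Fin N → ℕ) → (Y : List (Fin N × Fin N)) → ValidRun d Y → Prop}
    (nil : ∀ d (h : ValidRun d []), motive d [] h)
    (stage : ∀ d i B T (hsel : IsSel d i) (hB : IsStage d i B) (hT : ValidRun (residualDeg d B) T),
      motive (residualDeg d B) T hT → motive d (B ++ T) (validRun_stage_append hsel hB hT))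
    (d : Fin N → ℕ) (Y : List (Fin N × Fin N)) (h : ValidRun d Y) : motive d Y h := by
  induction hn : Y.length using Nat.strong_induction_on generalizing d Y with
  | _ n ih =>
    cases Y with
    | nil => exact nil d h
    | cons e Y =>
      obtain ⟨B, T, hsplit, hB, hT⟩ := h.exists_stage
      have hlen : T.length < n := by
        have := length_pos_iff.2 (hB.ne_nil h.1.1)
        rw [← hn, hsplit, length_append]
        omega
      have hsel := h.1
      revert h
      rw [hsplit]
      exact fun _ => stage d e.1 B T hsel hB hT (ih _ hlen _ _ hT rfl)

def runStages (Y : List (Fin N × Fin N)) : List (List (Fin N × Fin N)) :=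
  Y.splitBy (fun a b => a.1 == b.1)

theorem IsStage.runStages_append {d : Fin N → ℕ} {i : Fin N} {B T : List (Fin N × Fin N)}
    (hB : IsStage d i B) (hi : 0 < d i) (hT : ∀ f ∈ T, f.1 ≠ i ∧ f.2 ≠ i) :
    runStages (B ++ T) = B :: runStages T := by
  have hchain : B.IsChain fun a b => (a.1 == b.1) = true :=
    isChain_iff_pairwise.2 (pairwise_of_forall_mem_list fun a ha b hb => by
      simp [hB.fst_eq a ha, hB.fst_eq b hb])
  rw [runStages, splitBy_append, splitBy_of_isChain (hB.ne_nil hi) hchain]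
  · rfl
  · intro a ha b hb
    simpa [hB.fst_eq a (mem_of_mem_getLast? ha)] using (hT b (mem_of_mem_head? hb)).1.symm

theorem ValidRun.forall₂_perm_runStages {d : Fin N → ℕ} {Y₀ : List (Fin N × Fin N)}
    (h₀ : ValidRun d Y₀) {Y : List (Fin N × Fin N)} (hY : ValidRun d Y)
    (hsg : SameGraph Y Y₀) : Forall₂ Perm (runStages Y) (runStages Y₀) := by
  induction d, Y₀, h₀ using ValidRun.stage_induction generalizing Y with
  | nil d h₀ => simp [hY.eq_nil_of_forall_eq_zero h₀, runStages]
  | stage d i B₀ T₀ hsel hB₀ hT₀ ih =>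
    have hY : Y ∈ {Y | ValidRun d Y ∧ SameGraph Y (B₀ ++ T₀)} := ⟨hY, hsg⟩
    rw [setOf_validRun_sameGraph_stage_append hsel hB₀ hT₀] at hY
    obtain ⟨B, hperm, T, ⟨hT, hsgT⟩, rfl⟩ := hY
    rw [(hB₀.perm hperm.symm).runStages_append hsel.1
        (hT.forall_ne_of_eq_zero hB₀.residualDeg_self),
      hB₀.runStages_append hsel.1 (hT₀.forall_ne_of_eq_zero hB₀.residualDeg_self)]
    exact .cons hperm (ih hT hsgT)

theorem ValidRun.ncard_sameGraph {d : Fin N → ℕ} {Y₀ : List (Fin N × Fin N)}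
    (h₀ : ValidRun d Y₀) :
    {Y | ValidRun d Y ∧ SameGraph Y Y₀}.ncard =
      ((runStages Y₀).map fun B => B.length.factorial).prod := by
  induction d, Y₀, h₀ using ValidRun.stage_induction with
  | nil d h₀ =>
    have : {Y | ValidRun d Y ∧ SameGraph Y []} = {[]} := by
      ext Y
      exact ⟨fun h => h.1.eq_nil_of_forall_eq_zero h₀,
        by rintro rfl; exact ⟨h₀, fun _ _ => Iff.rfl⟩⟩
    simp [this, runStages]
  | stage d i B₀ T₀ hsel hB₀ hT₀ ih =>
    rw [setOf_validRun_sameGraph_stage_append hsel hB₀ hT₀,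
      Set.ncard_image2_append (fun B hB => hB.length_eq), hB₀.nodup.ncard_setOf_perm, ih,
      hB₀.runStages_append hsel.1 (hT₀.forall_ne_of_eq_zero hB₀.residualDeg_self), map_cons,
      prod_cons]

/-- (Blitzstein–Diaconis run counting) Any two runs of the sequential algorithm that
produce the same final graph select the same sequence of vertices and add the same
set of edges at each stage, possibly in a different order: grouping the edge lists
into consecutive stages (maximal blocks of edges sharing the same selected vertex),
corresponding stages are permutations of one another.  Consequently, the number of
distinct runs producing a given output graph equals `∏_k a_k!`, where `a_k` is the
number of edges added at stage `k` (the residual degree of the `k`-th selected vertex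
at the moment of its selection). -/
theorem blitzstein_diaconis_run_count {N : ℕ} (d : Fin N → ℕ)
    (Y₀ : List (Fin N × Fin N)) (h₀ : ValidRun d Y₀) :
    (∀ Y : List (Fin N × Fin N), ValidRun d Y → SameGraph Y Y₀ →
      List.Forall₂ List.Perm
        (Y.splitBy (fun a b => a.1 == b.1))
        (Y₀.splitBy (fun a b => a.1 == b.1))) ∧
    Set.ncard {Y : List (Fin N × Fin N) | ValidRun d Y ∧ SameGraph Y Y₀} =
      ((Y₀.splitBy (fun a b => a.1 == b.1)).map
        (fun block => Nat.factorial block.length)).prod :=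
  ⟨fun _ hY hsg => h₀.forall₂_perm_runStages hY hsg, h₀.ncard_sameGraph⟩
end
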